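/- Let A be a finite ring and γ₁,…,γ_d ∈ A pairwise commuting elements with γᵢ - γⱼ ∈ A^× for i ≠ j. If f ∈ A[X] has degree < d and the right evaluation (γᵢ)f = 0 for all i = 1,…,d, then f = 0. -/

import Mathlib

/-!
Right evaluation at `b` is additive and turns left multiplication by `X - C a` into left
multiplication by `b - a` as soon as `a` and `b` commute. Hence the left factor theorem holds:
if `(γ₀)f = 0` then `f = (X - γ₀) q` with `deg q < deg f`, and at every other point
`0 = (γᵢ)f = (γᵢ - γ₀) (γᵢ)q`, so `(γᵢ)q = 0` because `γᵢ - γ₀` is a unit. Induction on `d`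
then kills `f`.
-/

open Polynomial

/-- Right evaluation of a polynomial over a possibly noncommutative ring:
`(a)f = ∑ aⁱ fᵢ`. -/
noncomputable def rightEval {A : Type*} [Semiring A] (f : Polynomial A) (a : A) : A :=
  f.sum fun e c => a ^ e * c

section RightEval

variable {A : Type*} [Ring A]

lemma rightEval_add (f g : A[X]) (b : A) :
    rightEval (f + g) b = rightEval f b + rightEval g b :=
  sum_add_index f g _ (fun _ => mul_zero _) fun _ _ _ => mul_add _ _ _

lemma rightEval_sub (f g : A[X]) (b : A) :
    rightEval (f - g) b = rightEval f b - rightEval g b :=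
  eq_sub_of_add_eq (by rw [← rightEval_add, sub_add_cancel])

lemma rightEval_monomial (n : ℕ) (c b : A) : rightEval (monomial n c) b = b ^ n * c :=
  sum_monomial_index _ _ (mul_zero _)

lemma rightEval_C (c b : A) : rightEval (C c) b = c := by
  simpa using rightEval_monomial 0 c b

lemma rightEval_X_mul (f : A[X]) (b : A) : rightEval (X * f) b = b * rightEval f b := by
  induction f using Polynomial.induction_on' with
  | add f g hf hg => rw [mul_add, rightEval_add, hf, hg, rightEval_add, mul_add]
  | monomial n c => rw [X_mul_monomial, rightEval_monomial, rightEval_monomial, pow_succ',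
      mul_assoc]

lemma rightEval_C_mul {a b : A} (hab : Commute a b) (f : A[X]) :
    rightEval (C a * f) b = a * rightEval f b := by
  induction f using Polynomial.induction_on' with
  | add f g hf hg => rw [mul_add, rightEval_add, hf, hg, rightEval_add, mul_add]
  | monomial n c => rw [C_mul_monomial, rightEval_monomial, rightEval_monomial, ← mul_assoc,
      ← (hab.pow_right n).eq, mul_assoc]

lemma rightEval_X_sub_C_mul {a b : A} (hab : Commute a b) (f : A[X]) :
    rightEval ((X - C a) * f) b = (b - a) * rightEval f b := by
  rw [sub_mul, rightEval_sub, rightEval_X_mul, rightEval_C_mul hab, sub_mul]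

lemma eq_X_sub_C_mul_divByMonic_of_rightEval_eq_zero {f : A[X]} {a : A}
    (hf : rightEval f a = 0) : f = (X - C a) * (f /ₘ (X - C a)) := by
  nontriviality A
  have hdiv := modByMonic_add_div f (X - C a)
  set r := f %ₘ (X - C a)
  have hr : r = C (r.coeff 0) :=
    eq_C_of_degree_le_zero <| Nat.WithBot.lt_one_iff_le_zero.mp <| by
      simpa using degree_modByMonic_lt f (monic_X_sub_C a)
  have hr0 : r.coeff 0 = 0 := by
    rw [← hf, ← hdiv, rightEval_add, rightEval_X_sub_C_mul (Commute.refl a), sub_self,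
      zero_mul, add_zero, hr, rightEval_C, coeff_C_zero]
  rw [hr, hr0, C_0, zero_add] at hdiv
  exact hdiv.symm

end RightEval

lemma degree_lt_of_degree_X_sub_C_mul_lt {A : Type*} [Ring A] {a : A} {q : A[X]} {d : ℕ}
    (h : ((X - C a) * q).degree < ((d + 1 : ℕ) : WithBot ℕ)) : q.degree < d := by
  nontriviality A
  rw [(monic_X_sub_C a).degree_mul_comm, (monic_X_sub_C a).degree_mul, degree_X_sub_C,
    Nat.cast_succ] at h
  exact (WithBot.add_lt_add_iff_right WithBot.one_ne_bot).mp h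

theorem stmt_19_general {A : Type*} [Ring A] {d : ℕ} (γ : Fin d → A)
    (hcomm : ∀ i j, γ i * γ j = γ j * γ i)
    (hdiff : ∀ i j, i ≠ j → IsUnit (γ i - γ j))
    (f : A[X]) (hdeg : f.degree < (d : WithBot ℕ))
    (hvan : ∀ i, rightEval f (γ i) = 0) :
    f = 0 := by
  induction d generalizing f with
  | zero => exact degree_eq_bot.mp (by simpa using hdeg)
  | succ d ih =>
    have hf := eq_X_sub_C_mul_divByMonic_of_rightEval_eq_zero (hvan 0)
    suffices f /ₘ (X - C (γ 0)) = 0 by rw [hf, this, mul_zero]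
    refine ih (fun i => γ i.succ) (fun i j => hcomm _ _)
      (fun i j hij => hdiff _ _ ((Fin.succ_injective _).ne hij)) _
      (degree_lt_of_degree_X_sub_C_mul_lt (hf ▸ hdeg)) fun i => ?_
    have hi := hvan i.succ
    rw [hf, rightEval_X_sub_C_mul (hcomm 0 i.succ)] at hi
    exact (hdiff _ _ (Fin.succ_ne_zero i)).mul_right_eq_zero.mp hi

/-- over a finite ring `A`, a polynomial of degree `< d` whose right
evaluation vanishes at `d` pairwise commuting points with unit pairwise differences
is the zero polynomial. -/
theorem stmt_19 {A : Type*} [Ring A] [Fintype A] {d : ℕ} (γ : Fin d → A)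
    (hcomm : ∀ i j, γ i * γ j = γ j * γ i)
    (hdiff : ∀ i j, i ≠ j → IsUnit (γ i - γ j))
    (f : A[X]) (hdeg : f.degree < (d : WithBot ℕ))
    (hvan : ∀ i, rightEval f (γ i) = 0) :
    f = 0 :=
  stmt_19_general γ hcomm hdiff f hdeg hvan
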